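/- arXiv:1406.2088 — 2 statements merged into one kernel-verified Lean document; each statement's English description precedes it below -/
import Mathlib

section
/- Let f ∈ H²(𝕋²) and fix n ≥ 1. For every ε > 0 there exists δ ∈ (0,1) such that for ALL choices of a₁,...,a_{n−1}, b₁,...,b_{n−1} ∈ 𝔻 and all a_n, b_n ∈ 𝔻 with |a_n| > 1−δ and |b_n| > 1−δ, the n-th partial sum difference satisfies ‖D_n(f)‖² = Σ_{max(k,l)=n} |⟨f, B_k^a ⊗ B_l^b⟩|² < ε. -/
open MeasureTheory Real Complex Filter Finset

noncomputable section

/-- The point `e^{it}` on the unit circle. -/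
def bp (t : ℝ) : ℂ := Complex.exp (Complex.I * t)

/-- The product measure on `(-π,π] × (-π,π]` modelling the 2-torus. -/
def torusMeasure : Measure (ℝ × ℝ) :=
  (volume.restrict (Set.Ioc (-π) π)).prod (volume.restrict (Set.Ioc (-π) π))

/-- The `L²(𝕋²)` inner product. -/
def innerT2 (f g : ℝ × ℝ → ℂ) : ℂ :=
  (1 / (4 * (π : ℂ) ^ 2)) *
    ∫ t in (-π)..π, ∫ s in (-π)..π, f (t, s) * (starRingEnd ℂ) (g (t, s))

/-- The squared `L²(𝕋²)` norm. -/
def normT2Sq (f : ℝ × ℝ → ℂ) : ℝ :=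
  (1 / (4 * π ^ 2)) * ∫ t in (-π)..π, ∫ s in (-π)..π, ‖f (t, s)‖ ^ 2

/-- The double Fourier coefficient `c_{kl}`. -/
def fourierCoeff2 (f : ℝ × ℝ → ℂ) (k l : ℤ) : ℂ :=
  innerT2 f (fun x => Complex.exp (Complex.I * ((k : ℂ) * x.1 + (l : ℂ) * x.2)))

/-- Membership in `H²(𝕋²)`: square integrable, and the Fourier coefficients vanish
unless both indices are nonnegative. -/
def MemH2T2 (f : ℝ × ℝ → ℂ) : Prop :=
  MemLp f 2 torusMeasure ∧ ∀ k l : ℤ, (k < 0 ∨ l < 0) → fourierCoeff2 f k l = 0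

/-- The normalized Szegő kernel. -/
def szego (a z : ℂ) : ℂ := (Real.sqrt (1 - ‖a‖ ^ 2) : ℂ) / (1 - (starRingEnd ℂ) a * z)

/-- The Takenaka–Malmquist system generated by `a` (0-based: `TM a n` is `B_{n+1}`). -/
def TM (a : ℕ → ℂ) (n : ℕ) (z : ℂ) : ℂ :=
  szego (a n) z * ∏ l ∈ Finset.range n, ((z - a l) / (1 - (starRingEnd ℂ) (a l) * z))

/-- Boundary values of the product TM system on the 2-torus. -/
def TMprod (a b : ℕ → ℂ) (k l : ℕ) : ℝ × ℝ → ℂ :=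
  fun x => TM a k (bp x.1) * TM b l (bp x.2)

/-- Boundary values of the product Szegő kernel `e_a ⊗ e_b` on the 2-torus. -/
def szegoProd (a b : ℂ) : ℝ × ℝ → ℂ :=
  fun x => szego a (bp x.1) * szego b (bp x.2)

/-- `‖D_n(f)‖² = Σ_{max(k,l)=n} |⟨f, B_k^a ⊗ B_l^b⟩|²` (0-based: the paper's index `n`
corresponds to pairs `(k,l)` with `max k l = n - 1`, `k, l < n`). -/
def DnSq (f : ℝ × ℝ → ℂ) (a b : ℕ → ℂ) (n : ℕ) : ℝ :=
  ∑ p ∈ (Finset.range n ×ˢ Finset.range n).filter (fun p => max p.1 p.2 = n - 1),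
    ‖innerT2 f (TMprod a b p.1 p.2)‖ ^ 2

/-! On the circle each TM function `B_k^a` is an absolutely convergent power series
`Σ c_j e^{ijt}`. Since `|B_k^a| = |e_{a_k}|` there, Parseval gives `Σ |c_j|² = 1`, and writing
`B_k^a = e_{a_k} · (Blaschke product)` gives `|c_j| ≤ (j + 1) √(1 - |a_k|²)`. Hence
`⟨f, B_k^a ⊗ B_l^b⟩ = Σ conj (c_j d_m) f̂(j, m)` pairs the square-summable (Bessel) Fourier
coefficients of `f` with a unit vector of `ℓ²` that is uniformly small on any fixed finite set of
indices once `|a_k|` or `|b_l|` is close to `1`. Splitting the sum into such a finite set and its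
tail (Cauchy–Schwarz) makes each of the at most `n²` terms of `‖D_n(f)‖²` small. -/

open scoped ComplexConjugate

abbrev circleMeasure : Measure ℝ := volume.restrict (Set.Ioc (-π) π)

lemma torusMeasure_eq : torusMeasure = circleMeasure.prod circleMeasure := rfl

instance : IsFiniteMeasure torusMeasure := by
  rw [torusMeasure_eq]; infer_instance

lemma integral_exp_int_mul_circleMeasure (d : ℤ) :
    ∫ t, cexp (I * d * t) ∂circleMeasure = if d = 0 then (2 * π : ℂ) else 0 := by
  rw [← intervalIntegral.integral_of_le (by linarith [pi_pos])]
  split_ifs with hd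
  · simp [hd]; ring
  · have hId : I * d ≠ 0 := by simpa [I_ne_zero] using hd
    rw [integral_exp_mul_complex hId]
    have : cexp (I * d * ((-π : ℝ) : ℂ)) = cexp (I * d * π) := by
      rw [show I * d * ((-π : ℝ) : ℂ) = I * d * π + (-d : ℤ) * (2 * π * I) by push_cast; ring,
        Complex.exp_add, exp_int_mul_two_pi_mul_I, mul_one]
    rw [this, sub_self, zero_div]

lemma norm_bp (t : ℝ) : ‖bp t‖ = 1 := by
  rw [bp, mul_comm]; exact norm_exp_ofReal_mul_I t

@[fun_prop]
lemma continuous_bp : Continuous bp := by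
  unfold bp; fun_prop

lemma bp_pow_mul_conj_bp_pow (t : ℝ) (m j : ℕ) :
    bp t ^ m * conj (bp t ^ j) = cexp (I * ((m - j : ℤ) : ℂ) * t) := by
  rw [bp, ← Complex.exp_nat_mul, ← Complex.exp_nat_mul, ← exp_conj, ← Complex.exp_add]
  congr 1
  simp only [map_mul, map_natCast, conj_I, conj_ofReal]
  push_cast; ring

lemma integral_tsum_of_norm_le_mul {α ι : Type*} [MeasurableSpace α] {μ : Measure α} [Countable ι]
    {F : ι → α → ℂ} (hF : ∀ i, AEStronglyMeasurable (F i) μ) {b : ι → ℝ} (hb : Summable b)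
    {G : α → ℝ} (hG : Integrable G μ) (hFb : ∀ i x, ‖F i x‖ ≤ b i * G x) :
    ∫ x, ∑' i, F i x ∂μ = ∑' i, ∫ x, F i x ∂μ := by
  have hFi : ∀ i, Integrable (F i) μ := fun i =>
    (hG.const_mul (b i)).mono' (hF i) (Eventually.of_forall (hFb i))
  refine (integral_tsum_of_summable_integral_norm hFi ?_).symm
  refine (hb.mul_right (∫ x, G x ∂μ)).of_nonneg_of_le
    (fun i => integral_nonneg fun _ => norm_nonneg _) fun i => ?_
  rw [← integral_const_mul]
  exact integral_mono (hFi i).norm (hG.const_mul (b i)) (hFb i)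

structure HasWienerExpansion (g : ℝ → ℂ) (c : ℕ → ℂ) : Prop where
  summable_norm : Summable fun j => ‖c j‖
  eq_tsum : ∀ t, g t = ∑' j, c j * bp t ^ j

namespace HasWienerExpansion

variable {g h : ℝ → ℂ} {c d : ℕ → ℂ}

lemma summable_norm_mul_bp_pow (hg : HasWienerExpansion g c) (t : ℝ) :
    Summable fun j => ‖c j * bp t ^ j‖ := by
  simpa only [norm_mul, norm_pow, norm_bp, one_pow, mul_one] using hg.summable_norm

lemma summable_norm_sq (hg : HasWienerExpansion g c) : Summable fun j => ‖c j‖ ^ 2 :=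
  (hg.summable_norm.mul_left (∑' j, ‖c j‖)).of_nonneg_of_le (fun _ => sq_nonneg _) fun j => by
    rw [sq]
    exact mul_le_mul_of_nonneg_right (hg.summable_norm.le_tsum j fun _ _ => norm_nonneg _)
      (norm_nonneg _)

lemma norm_le (hg : HasWienerExpansion g c) (t : ℝ) : ‖g t‖ ≤ ∑' j, ‖c j‖ := by
  rw [hg.eq_tsum t]
  refine (norm_tsum_le_tsum_norm (hg.summable_norm_mul_bp_pow t)).trans_eq ?_
  simp only [norm_mul, norm_pow, norm_bp, one_pow, mul_one]

lemma continuous (hg : HasWienerExpansion g c) : Continuous g := by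
  rw [funext hg.eq_tsum]
  refine continuous_tsum (fun j => continuous_const.mul (continuous_bp.pow j)) hg.summable_norm
    fun j t => ?_
  rw [norm_mul, norm_pow, norm_bp, one_pow, mul_one]

lemma const_mul (hg : HasWienerExpansion g c) (r : ℂ) :
    HasWienerExpansion (fun t => r * g t) (fun j => r * c j) where
  summable_norm := by simpa only [norm_mul] using hg.summable_norm.mul_left ‖r‖
  eq_tsum t := by simp only [hg.eq_tsum t, ← tsum_mul_left, mul_assoc]

lemma mul (hg : HasWienerExpansion g c) (hh : HasWienerExpansion h d) :
    HasWienerExpansion (fun t => g t * h t)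
      (fun j => ∑ p ∈ antidiagonal j, c p.1 * d p.2) where
  summable_norm := summable_norm_sum_mul_antidiagonal_of_summable_norm hg.summable_norm
    hh.summable_norm
  eq_tsum t := by
    rw [hg.eq_tsum t, hh.eq_tsum t, tsum_mul_tsum_eq_tsum_sum_antidiagonal_of_summable_norm
      (hg.summable_norm_mul_bp_pow t) (hh.summable_norm_mul_bp_pow t)]
    refine tsum_congr fun j => ?_
    rw [Finset.sum_mul]
    refine Finset.sum_congr rfl fun p hp => ?_
    rw [← mem_antidiagonal.1 hp, pow_add]
    ring

lemma integral_mul_conj_bp_pow (hg : HasWienerExpansion g c) (j : ℕ) :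
    ∫ t, g t * conj (bp t ^ j) ∂circleMeasure = 2 * π * c j := by
  have hexp : ∀ t, g t * conj (bp t ^ j) = ∑' m, c m * cexp (I * ((m - j : ℤ) : ℂ) * t) := by
    intro t
    rw [hg.eq_tsum t, ← tsum_mul_right]
    simp only [mul_assoc, bp_pow_mul_conj_bp_pow]
  simp_rw [hexp]
  rw [integral_tsum_of_norm_le_mul (b := fun m => ‖c m‖) (G := fun _ => 1)
    (fun m => (by fun_prop : Continuous _).aestronglyMeasurable) hg.summable_norm
    (integrable_const 1) fun m t => ?_]
  · simp only [integral_const_mul, integral_exp_int_mul_circleMeasure, sub_eq_zero, Nat.cast_inj,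
      mul_ite, mul_zero]
    rw [tsum_ite_eq]
    ring
  · simp [Complex.norm_exp]

lemma integral_norm_sq (hg : HasWienerExpansion g c) :
    ∫ t, ‖g t‖ ^ 2 ∂circleMeasure = 2 * π * ∑' j, ‖c j‖ ^ 2 := by
  have hexp : ∀ t, ((‖g t‖ ^ 2 : ℝ) : ℂ) = ∑' j, conj (c j) * (g t * conj (bp t ^ j)) := by
    intro t
    push_cast
    rw [← mul_conj', hg.eq_tsum t, Complex.conj_tsum, ← hg.eq_tsum t, ← tsum_mul_left]
    simp only [map_mul]
    exact tsum_congr fun j => by ring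
  have hswap : ∫ t, ∑' j, conj (c j) * (g t * conj (bp t ^ j)) ∂circleMeasure
      = ∑' j, ∫ t, conj (c j) * (g t * conj (bp t ^ j)) ∂circleMeasure := by
    have := hg.continuous
    refine integral_tsum_of_norm_le_mul (b := fun j => ‖c j‖) (G := fun _ => ∑' j, ‖c j‖)
      (fun j => (by fun_prop : Continuous _).aestronglyMeasurable) hg.summable_norm
      (integrable_const _) fun j t => ?_
    rw [norm_mul, norm_mul, RCLike.norm_conj, RCLike.norm_conj, norm_pow, norm_bp, one_pow,
      mul_one]
    exact mul_le_mul_of_nonneg_left (hg.norm_le t) (norm_nonneg _)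
  have : ((∫ t, ‖g t‖ ^ 2 ∂circleMeasure : ℝ) : ℂ) = ((2 * π * ∑' j, ‖c j‖ ^ 2 : ℝ) : ℂ) := by
    rw [← integral_complex_ofReal]
    simp_rw [hexp]
    rw [hswap]
    simp only [integral_const_mul, hg.integral_mul_conj_bp_pow, ofReal_mul, ofReal_tsum,
      ← tsum_mul_left]
    refine tsum_congr fun j => ?_
    push_cast
    rw [← mul_conj']
    ring
  exact_mod_cast this

lemma tsum_norm_sq_eq (hg : HasWienerExpansion g c) (hh : HasWienerExpansion h d)
    (hgh : ∀ t, ‖g t‖ = ‖h t‖) : ∑' j, ‖c j‖ ^ 2 = ∑' j, ‖d j‖ ^ 2 := by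
  have h2 := hg.integral_norm_sq
  simp_rw [hgh, hh.integral_norm_sq] at h2
  exact mul_left_cancel₀ (by positivity) h2.symm

end HasWienerExpansion

open Polynomial in
lemma hasWienerExpansion_eval (p : ℂ[X]) :
    HasWienerExpansion (fun t => p.eval (bp t)) p.coeff where
  summable_norm := summable_of_ne_finset_zero (s := p.support) fun j hj => by
    simp [notMem_support_iff.1 hj]
  eq_tsum t := by
    rw [tsum_eq_sum (s := p.support) fun j hj => by simp [notMem_support_iff.1 hj], eval_eq_sum]
    rfl

lemma hasWienerExpansion_inv_one_sub_conj_mul {a : ℂ} (ha : ‖a‖ < 1) :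
    HasWienerExpansion (fun t => (1 - conj a * bp t)⁻¹) (fun j => conj a ^ j) where
  summable_norm := by
    simpa only [norm_pow, RCLike.norm_conj] using summable_geometric_of_lt_one (norm_nonneg a) ha
  eq_tsum t := by
    rw [← tsum_geometric_of_norm_lt_one (by rwa [norm_mul, RCLike.norm_conj, norm_bp, mul_one])]
    simp_rw [mul_pow]

def blaschke (a z : ℂ) : ℂ := (z - a) / (1 - conj a * z)

lemma TM_eq_szego_mul_prod_blaschke (a : ℕ → ℂ) (k : ℕ) (z : ℂ) :
    TM a k z = szego (a k) z * ∏ i ∈ range k, blaschke (a i) z := rfl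

lemma norm_blaschke {a z : ℂ} (ha : ‖a‖ < 1) (hz : ‖z‖ = 1) : ‖blaschke a z‖ = 1 := by
  have hzz : z * conj z = 1 := by rw [mul_conj', hz]; norm_num
  have hden : 1 - conj a * z = z * conj (z - a) := by
    rw [map_sub]; linear_combination -hzz
  have hza : z - a ≠ 0 := fun h => by
    rw [sub_eq_zero.1 h] at hz; exact ha.ne hz
  rw [blaschke, hden, norm_div, norm_mul, hz, one_mul, RCLike.norm_conj,
    div_self (norm_ne_zero_iff.2 hza)]

lemma norm_TM_eq_norm_szego {a : ℕ → ℂ} {k : ℕ} (ha : ∀ i < k, ‖a i‖ < 1) {z : ℂ}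
    (hz : ‖z‖ = 1) : ‖TM a k z‖ = ‖szego (a k) z‖ := by
  rw [TM_eq_szego_mul_prod_blaschke, norm_mul, norm_prod,
    prod_eq_one fun i hi => norm_blaschke (ha i (mem_range.1 hi)) hz, mul_one]

open Polynomial in
lemma hasWienerExpansion_blaschke {a : ℂ} (ha : ‖a‖ < 1) :
    HasWienerExpansion (fun t => blaschke a (bp t)) (fun j => ∑ p ∈ antidiagonal j,
      (X - C a).coeff p.1 * conj a ^ p.2) := by
  convert (hasWienerExpansion_eval (X - C a)).mul (hasWienerExpansion_inv_one_sub_conj_mul ha)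
    using 2 with t
  simp [blaschke, div_eq_mul_inv]

lemma exists_hasWienerExpansion_prod_blaschke {a : ℕ → ℂ} {k : ℕ} (ha : ∀ i < k, ‖a i‖ < 1) :
    ∃ P, HasWienerExpansion (fun t => ∏ i ∈ range k, blaschke (a i) (bp t)) P ∧
      HasSum (fun j => ‖P j‖ ^ 2) 1 := by
  have hexists : ∀ k, (∀ i < k, ‖a i‖ < 1) →
      ∃ P, HasWienerExpansion (fun t => ∏ i ∈ range k, blaschke (a i) (bp t)) P := by
    intro k ha
    induction k with
    | zero => exact ⟨_, by simpa using hasWienerExpansion_eval 1⟩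
    | succ k ih =>
      obtain ⟨P, hP⟩ := ih fun i hi => ha i (hi.trans k.lt_succ_self)
      have := hP.mul (hasWienerExpansion_blaschke (ha k k.lt_succ_self))
      exact ⟨_, by simpa only [prod_range_succ] using this⟩
  obtain ⟨P, hP⟩ := hexists k ha
  refine ⟨P, hP, hP.summable_norm_sq.hasSum_iff.2 ?_⟩
  rw [hP.tsum_norm_sq_eq (hasWienerExpansion_eval 1) fun t => by
    simp [norm_prod, prod_eq_one fun i hi => norm_blaschke (ha i (mem_range.1 hi)) (norm_bp t)]]
  simp [Polynomial.coeff_one, apply_ite]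

lemma hasWienerExpansion_szego {a : ℂ} (ha : ‖a‖ < 1) :
    HasWienerExpansion (fun t => szego a (bp t)) (fun j => √(1 - ‖a‖ ^ 2) * conj a ^ j) := by
  simpa only [szego, div_eq_mul_inv] using
    (hasWienerExpansion_inv_one_sub_conj_mul ha).const_mul _

lemma tsum_norm_sq_szego_coeff {a : ℂ} (ha : ‖a‖ < 1) :
    ∑' j, ‖(√(1 - ‖a‖ ^ 2) : ℂ) * conj a ^ j‖ ^ 2 = 1 := by
  have ha2 : ‖a‖ ^ 2 < 1 := by nlinarith [norm_nonneg a]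
  have hterm : ∀ j : ℕ, ‖(√(1 - ‖a‖ ^ 2) : ℂ) * conj a ^ j‖ ^ 2
      = (1 - ‖a‖ ^ 2) * (‖a‖ ^ 2) ^ j := by
    intro j
    rw [norm_mul, norm_pow, RCLike.norm_conj, norm_real, Real.norm_eq_abs, mul_pow, sq_abs,
      Real.sq_sqrt (by linarith), ← pow_mul, ← pow_mul]
    ring
  rw [tsum_congr hterm, tsum_mul_left, tsum_geometric_of_lt_one (by positivity) ha2,
    mul_inv_cancel₀ (by linarith)]

lemma norm_le_one_of_hasSum_norm_sq {ι E : Type*} [SeminormedAddCommGroup E] {c : ι → E}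
    (h : HasSum (fun j => ‖c j‖ ^ 2) 1) (j : ι) : ‖c j‖ ≤ 1 := by
  have : ‖c j‖ ^ 2 ≤ 1 := h.tsum_eq ▸ h.summable.le_tsum j fun _ _ => sq_nonneg _
  nlinarith [norm_nonneg (c j)]

lemma hasSum_sq_norm_mul_norm {ι ι' E F : Type*} [SeminormedAddCommGroup E]
    [SeminormedAddCommGroup F] {c : ι → E} {d : ι' → F} (hc : HasSum (fun i => ‖c i‖ ^ 2) 1)
    (hd : HasSum (fun i => ‖d i‖ ^ 2) 1) :
    HasSum (fun p : ι × ι' => (‖c p.1‖ * ‖d p.2‖) ^ 2) 1 := by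
  simp only [mul_pow]
  simpa using hc.mul hd (hc.summable.mul_of_nonneg hd.summable (fun _ => by positivity)
    fun _ => by positivity)

lemma exists_hasWienerExpansion_TM {a : ℕ → ℂ} {k : ℕ} (ha : ∀ i ≤ k, ‖a i‖ < 1) :
    ∃ c, HasWienerExpansion (fun t => TM a k (bp t)) c ∧ HasSum (fun j => ‖c j‖ ^ 2) 1 ∧
      ∀ j, ‖c j‖ ≤ (j + 1) * √(1 - ‖a k‖ ^ 2) := by
  have hak := ha k le_rfl
  have hS := hasWienerExpansion_szego hak
  obtain ⟨P, hP, hP1⟩ := exists_hasWienerExpansion_prod_blaschke fun i hi => ha i hi.le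
  refine ⟨_, hS.mul hP, (hS.mul hP).summable_norm_sq.hasSum_iff.2 ?_, fun j => ?_⟩
  · rw [(hS.mul hP).tsum_norm_sq_eq hS fun t =>
      norm_TM_eq_norm_szego (fun i hi => ha i hi.le) (norm_bp t), tsum_norm_sq_szego_coeff hak]
  set r := √(1 - ‖a k‖ ^ 2)
  calc _ ≤ ∑ p ∈ antidiagonal j, ‖(r : ℂ) * conj (a k) ^ p.1‖ * ‖P p.2‖ :=
        norm_sum_le_of_le _ fun p _ => norm_mul_le _ _
    _ ≤ ∑ p ∈ antidiagonal j, r * 1 * 1 := by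
        refine sum_le_sum fun p _ => ?_
        rw [norm_mul, norm_pow, RCLike.norm_conj, norm_real, Real.norm_of_nonneg (sqrt_nonneg _)]
        gcongr
        · exact pow_le_one₀ (norm_nonneg _) hak.le
        · exact norm_le_one_of_hasSum_norm_sq hP1 p.2
    _ = (j + 1) * r := by simp [Nat.card_antidiagonal]

def torusChar (p : ℤ × ℤ) (x : ℝ × ℝ) : ℂ := cexp (I * (p.1 * x.1 + p.2 * x.2))

lemma norm_torusChar (p : ℤ × ℤ) (x : ℝ × ℝ) : ‖torusChar p x‖ = 1 := by
  simp [torusChar, Complex.norm_exp]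

@[fun_prop]
lemma continuous_torusChar (p : ℤ × ℤ) : Continuous (torusChar p) := by
  unfold torusChar; fun_prop

lemma memLp_torusChar (p : ℤ × ℤ) : MemLp (torusChar p) 2 torusMeasure :=
  memLp_top_of_bound (continuous_torusChar p).aestronglyMeasurable 1
    (Eventually.of_forall fun x => (norm_torusChar p x).le) |>.mono_exponent le_top

lemma bp_pow_mul_bp_pow (x : ℝ × ℝ) (j m : ℕ) :
    bp x.1 ^ j * bp x.2 ^ m = torusChar (j, m) x := by
  rw [bp, bp, ← Complex.exp_nat_mul, ← Complex.exp_nat_mul, ← Complex.exp_add, torusChar]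
  push_cast; ring_nf

lemma integral_conj_torusChar_mul (p q : ℤ × ℤ) :
    ∫ x, conj (torusChar p x) * torusChar q x ∂torusMeasure
      = if p = q then ((2 * π) ^ 2 : ℂ) else 0 := by
  have hsplit : ∀ x : ℝ × ℝ, conj (torusChar p x) * torusChar q x
      = cexp (I * ((q.1 - p.1 : ℤ) : ℂ) * x.1) * cexp (I * ((q.2 - p.2 : ℤ) : ℂ) * x.2) := by
    intro x
    rw [torusChar, torusChar, ← exp_conj, ← Complex.exp_add, ← Complex.exp_add]
    congr 1
    simp only [map_mul, map_add, conj_I, conj_ofReal, map_intCast]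
    push_cast; ring
  simp_rw [hsplit, torusMeasure_eq]
  rw [integral_prod_mul (fun t : ℝ => cexp (I * ((q.1 - p.1 : ℤ) : ℂ) * t))
    (fun s : ℝ => cexp (I * ((q.2 - p.2 : ℤ) : ℂ) * s)), integral_exp_int_mul_circleMeasure,
    integral_exp_int_mul_circleMeasure]
  simp only [sub_eq_zero, Prod.ext_iff, eq_comm (a := q.1), eq_comm (a := q.2)]
  split_ifs <;> simp_all [sq]

lemma innerT2_eq_integral {f g : ℝ × ℝ → ℂ}
    (hfg : Integrable (fun x => f x * conj (g x)) torusMeasure) :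
    innerT2 f g = (1 / (4 * (π : ℂ) ^ 2)) * ∫ x, f x * conj (g x) ∂torusMeasure := by
  rw [innerT2, torusMeasure_eq, integral_prod _ hfg,
    intervalIntegral.integral_of_le (by linarith [pi_pos])]
  simp_rw [intervalIntegral.integral_of_le (by linarith [pi_pos] : -π ≤ π)]

lemma fourierCoeff2_eq_integral {f : ℝ × ℝ → ℂ} (hf : MemLp f 2 torusMeasure) (p : ℤ × ℤ) :
    fourierCoeff2 f p.1 p.2
      = (1 / (4 * (π : ℂ) ^ 2)) * ∫ x, f x * conj (torusChar p x) ∂torusMeasure :=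
  innerT2_eq_integral <| (hf.integrable one_le_two).mul_bdd (c := 1)
    (by fun_prop : Continuous fun x => conj (torusChar p x)).aestronglyMeasurable
    (Eventually.of_forall fun x => by rw [RCLike.norm_conj]; exact (norm_torusChar p x).le)

/-- Bessel's inequality for the orthonormal family `(2π)⁻¹ • torusChar p` in `L²`. -/
lemma summable_norm_fourierCoeff2_sq {f : ℝ × ℝ → ℂ} (hf : MemLp f 2 torusMeasure) :
    Summable fun p : ℤ × ℤ => ‖fourierCoeff2 f p.1 p.2‖ ^ 2 := by
  have hinner : ∀ p {g : ℝ × ℝ → ℂ} (hg : MemLp g 2 torusMeasure),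
      inner ℂ ((memLp_torusChar p).toLp _) (hg.toLp g)
        = ∫ x, g x * conj (torusChar p x) ∂torusMeasure := by
    intro p g hg
    rw [L2.inner_def]
    refine integral_congr_ae ?_
    filter_upwards [(memLp_torusChar p).coeFn_toLp, hg.coeFn_toLp] with x h1 h2
    rw [RCLike.inner_apply, h1, h2, mul_comm]
  have hπ : (2 * π : ℂ) ≠ 0 := by exact_mod_cast (by positivity : 2 * π ≠ 0)
  have hconj : conj (2 * π : ℂ)⁻¹ = (2 * π : ℂ)⁻¹ := by
    rw [map_inv₀, map_mul, map_ofNat, conj_ofReal]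
  let e : ℤ × ℤ → Lp ℂ 2 torusMeasure := fun p => (2 * π : ℂ)⁻¹ • (memLp_torusChar p).toLp _
  have he : Orthonormal ℂ e := by
    rw [orthonormal_iff_ite]
    intro p q
    simp only [e, inner_smul_left, inner_smul_right, hinner, hconj, mul_comm (torusChar q _),
      integral_conj_torusChar_mul]
    split_ifs
    · field_simp
    · simp
  have hcoeff : ∀ p, inner ℂ (e p) (hf.toLp f) = ((2 * π : ℝ) : ℂ) * fourierCoeff2 f p.1 p.2 := by
    intro p
    rw [inner_smul_left, hconj, hinner, fourierCoeff2_eq_integral hf]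
    push_cast
    field_simp
    ring
  refine ((he.inner_products_summable (hf.toLp f)).mul_left ((2 * π) ^ 2)⁻¹).congr fun p => ?_
  rw [hcoeff, norm_mul, norm_real, Real.norm_of_nonneg (by positivity)]
  field_simp

lemma innerT2_mul_eq_tsum {f : ℝ × ℝ → ℂ} (hf : MemLp f 2 torusMeasure) {g h : ℝ → ℂ}
    {c d : ℕ → ℂ} (hg : HasWienerExpansion g c) (hh : HasWienerExpansion h d) :
    innerT2 f (fun x => g x.1 * h x.2)
      = ∑' p : ℕ × ℕ, conj (c p.1 * d p.2) * fourierCoeff2 f p.1 p.2 := by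
  have hgc := hg.continuous
  have hhc := hh.continuous
  have hexp : ∀ x : ℝ × ℝ, f x * conj (g x.1 * h x.2)
      = ∑' p : ℕ × ℕ, conj (c p.1 * d p.2) * (f x * conj (torusChar (p.1, p.2) x)) := by
    intro x
    rw [hg.eq_tsum, hh.eq_tsum, tsum_mul_tsum_of_summable_norm (hg.summable_norm_mul_bp_pow x.1)
      (hh.summable_norm_mul_bp_pow x.2), Complex.conj_tsum, ← tsum_mul_left]
    refine tsum_congr fun p => ?_
    rw [← bp_pow_mul_bp_pow]
    simp only [map_mul]
    ring
  have hint : Integrable (fun x => f x * conj (g x.1 * h x.2)) torusMeasure :=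
    (hf.integrable one_le_two).mul_bdd (c := (∑' j, ‖c j‖) * ∑' j, ‖d j‖)
      (by fun_prop : Continuous fun x : ℝ × ℝ => conj (g x.1 * h x.2)).aestronglyMeasurable
      (Eventually.of_forall fun x => by
        rw [RCLike.norm_conj, norm_mul]
        exact mul_le_mul (hg.norm_le _) (hh.norm_le _) (norm_nonneg _)
          ((norm_nonneg _).trans (hg.norm_le x.1)))
  rw [innerT2_eq_integral hint]
  simp_rw [hexp]
  rw [integral_tsum_of_norm_le_mul
    (F := fun p x => conj (c p.1 * d p.2) * (f x * conj (torusChar (p.1, p.2) x)))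
    (b := fun p : ℕ × ℕ => ‖c p.1‖ * ‖d p.2‖) (G := fun x => ‖f x‖)
    (fun p => (hf.aestronglyMeasurable.mul (by fun_prop : Continuous fun x =>
      conj (torusChar (p.1, p.2) x)).aestronglyMeasurable).const_mul _)
    (hg.summable_norm.mul_of_nonneg hh.summable_norm (fun _ => norm_nonneg _)
      fun _ => norm_nonneg _)
    (hf.integrable one_le_two).norm fun p x => ?_, ← tsum_mul_left]
  · refine tsum_congr fun p => ?_
    rw [integral_const_mul, fourierCoeff2_eq_integral hf (p.1, p.2)]
    ring
  · rw [norm_mul, norm_mul, RCLike.norm_conj, norm_mul, RCLike.norm_conj, norm_torusChar]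
    exact le_of_eq (by ring)

lemma summable_mul_of_summable_sq {ι : Type*} {x y : ι → ℝ} (hx : Summable fun i => x i ^ 2)
    (hy : Summable fun i => y i ^ 2) : Summable fun i => x i * y i :=
  (hx.add hy).of_norm_bounded fun i => by
    rw [Real.norm_eq_abs, abs_mul]
    nlinarith [sq_abs (x i), sq_abs (y i), sq_nonneg (|x i| - |y i|), abs_nonneg (x i)]

lemma exists_finset_forall_tsum_mul_lt {ι : Type*} {c : ι → ℝ} (hc0 : ∀ i, 0 ≤ c i)
    (hc : Summable fun i => c i ^ 2) {ε : ℝ} (hε : 0 < ε) :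
    ∃ S : Finset ι, ∃ η > 0, ∀ x : ι → ℝ, Summable (fun i => x i ^ 2) → ∑' i, x i ^ 2 ≤ 1 →
      (∀ i ∈ S, x i ≤ η) → ∑' i, x i * c i < ε := by
  classical
  obtain ⟨S, hS⟩ := hc.vanishing (Iio_mem_nhds (by positivity : (0 : ℝ) < (ε / 2) ^ 2))
  have hcS : 0 ≤ ∑ i ∈ S, c i := sum_nonneg fun i _ => hc0 i
  refine ⟨S, ε / (4 * (∑ i ∈ S, c i + 1)), by positivity, fun x hx hx1 hxS => ?_⟩
  have hpartial : ∀ T : Finset ι, ∑ i ∈ T, x i * c i ≤ 3 * ε / 4 := by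
    intro T
    rw [← sum_filter_add_sum_filter_not T (· ∈ S)]
    have hin : ∑ i ∈ T.filter (· ∈ S), x i * c i ≤ ε / 4 :=
      calc ∑ i ∈ T.filter (· ∈ S), x i * c i
          ≤ ∑ i ∈ S, ε / (4 * (∑ i ∈ S, c i + 1)) * c i := by
            refine (sum_le_sum fun i hi => mul_le_mul_of_nonneg_right
              (hxS i (mem_filter.1 hi).2) (hc0 i)).trans ?_
            exact sum_le_sum_of_subset_of_nonneg (fun i hi => (mem_filter.1 hi).2)
              fun i _ _ => mul_nonneg (by positivity) (hc0 i)
        _ ≤ ε / 4 := by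
            rw [← mul_sum, div_mul_eq_mul_div, div_le_div_iff₀ (by positivity) (by positivity)]
            nlinarith
    have hout : ∑ i ∈ T.filter (· ∉ S), x i * c i ≤ ε / 2 := by
      refine (Real.sum_mul_le_sqrt_mul_sqrt _ x c).trans ?_
      have hx' : √(∑ i ∈ T.filter (· ∉ S), x i ^ 2) ≤ 1 :=
        Real.sqrt_le_one.2 ((hx.sum_le_tsum _ fun _ _ => sq_nonneg _).trans hx1)
      have hc' : √(∑ i ∈ T.filter (· ∉ S), c i ^ 2) ≤ ε / 2 := by
        rw [← Real.sqrt_sq (by positivity : 0 ≤ ε / 2)]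
        exact Real.sqrt_le_sqrt (hS _ (disjoint_left.2 fun i hi => (mem_filter.1 hi).2)).le
      nlinarith [Real.sqrt_nonneg (∑ i ∈ T.filter (· ∉ S), x i ^ 2),
        Real.sqrt_nonneg (∑ i ∈ T.filter (· ∉ S), c i ^ 2)]
    linarith
  calc ∑' i, x i * c i ≤ 3 * ε / 4 := tsum_le_of_sum_le' (by positivity) hpartial
    _ < ε := by linarith

lemma add_one_mul_sqrt_one_sub_sq_le {η r : ℝ} {j N : ℕ} (hη : 0 ≤ η) (hj : j < N)
    (hr : 1 - η ^ 2 / (2 * N ^ 2) < r) : (j + 1) * √(1 - r ^ 2) ≤ η := by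
  have hN : (0 : ℝ) < N := by exact_mod_cast hj.pos
  have hjN : (j + 1 : ℝ) ≤ N := by exact_mod_cast hj
  have hr2 : 1 - r ^ 2 ≤ η ^ 2 / N ^ 2 :=
    calc 1 - r ^ 2 ≤ 2 * (1 - r) := by nlinarith [sq_nonneg (1 - r)]
      _ ≤ 2 * (η ^ 2 / (2 * N ^ 2)) := by linarith
      _ = η ^ 2 / N ^ 2 := by field_simp
  calc (j + 1) * √(1 - r ^ 2) ≤ N * √(η ^ 2 / N ^ 2) := by gcongr
    _ = η := by
        rw [Real.sqrt_div' _ (by positivity), Real.sqrt_sq hη, Real.sqrt_sq hN.le]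
        field_simp

lemma exists_forall_norm_innerT2_TMprod_lt {f : ℝ × ℝ → ℂ} (hf : MemLp f 2 torusMeasure)
    {ε : ℝ} (hε : 0 < ε) :
    ∃ δ, 0 < δ ∧ δ < 1 ∧ ∀ (a b : ℕ → ℂ) (k l : ℕ), (∀ i ≤ k, ‖a i‖ < 1) →
      (∀ i ≤ l, ‖b i‖ < 1) → (1 - δ < ‖a k‖ ∨ 1 - δ < ‖b l‖) →
        ‖innerT2 f (TMprod a b k l)‖ < ε := by
  set F : ℕ × ℕ → ℝ := fun p => ‖fourierCoeff2 f p.1 p.2‖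
  have hF : Summable fun p => F p ^ 2 :=
    (summable_norm_fourierCoeff2_sq hf).comp_injective
      (i := fun p : ℕ × ℕ => ((p.1 : ℤ), (p.2 : ℤ))) fun p q h => by
        simp only [Prod.mk.injEq, Nat.cast_inj] at h; exact Prod.ext h.1 h.2
  obtain ⟨S, η, hη, hS⟩ := exists_finset_forall_tsum_mul_lt (fun _ => norm_nonneg _) hF hε
  set N : ℕ := S.sup (fun p => max p.1 p.2) + 1
  have hN : ∀ p ∈ S, p.1 < N ∧ p.2 < N := fun p hp => by
    have := le_sup (f := fun p : ℕ × ℕ => max p.1 p.2) hp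
    omega
  set δ := min (1 / 2) (η ^ 2 / (2 * N ^ 2))
  have hδ : ∀ {r : ℝ}, 1 - δ < r → 1 - η ^ 2 / (2 * N ^ 2) < r := fun hr => by
    linarith [min_le_right (1 / 2) (η ^ 2 / (2 * N ^ 2))]
  refine ⟨δ, by positivity, (min_le_left _ _).trans_lt (by norm_num), fun a b k l ha hb hab => ?_⟩
  obtain ⟨c, hc, hc1, hcj⟩ := exists_hasWienerExpansion_TM ha
  obtain ⟨d, hd, hd1, hdj⟩ := exists_hasWienerExpansion_TM hb
  set x : ℕ × ℕ → ℝ := fun p => ‖c p.1‖ * ‖d p.2‖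
  have hx : HasSum (fun p => x p ^ 2) 1 := hasSum_sq_norm_mul_norm hc1 hd1
  have hxS : ∀ p ∈ S, x p ≤ η := by
    intro p hp
    rcases hab with hak | hbl
    · exact (mul_le_of_le_one_right (norm_nonneg _) (norm_le_one_of_hasSum_norm_sq hd1 p.2)).trans
        ((hcj p.1).trans (add_one_mul_sqrt_one_sub_sq_le hη.le (hN p hp).1 (hδ hak)))
    · exact (mul_le_of_le_one_left (norm_nonneg _) (norm_le_one_of_hasSum_norm_sq hc1 p.1)).trans
        ((hdj p.2).trans (add_one_mul_sqrt_one_sub_sq_le hη.le (hN p hp).2 (hδ hbl)))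
  have hnorm : ∀ p : ℕ × ℕ, ‖conj (c p.1 * d p.2) * fourierCoeff2 f p.1 p.2‖ = x p * F p :=
    fun p => by rw [norm_mul, RCLike.norm_conj, norm_mul]
  unfold TMprod
  rw [innerT2_mul_eq_tsum hf hc hd]
  calc _ ≤ ∑' p, x p * F p := (norm_tsum_le_tsum_norm
        ((summable_mul_of_summable_sq hx.summable hF).congr fun p => (hnorm p).symm)).trans_eq
        (tsum_congr hnorm)
    _ < ε := hS x hx.summable hx.tsum_eq.le hxS

theorem DnSq_small_near_boundary_general (f : ℝ × ℝ → ℂ) (hf : MemH2T2 f)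
    (n : ℕ) (ε : ℝ) (hε : 0 < ε) :
    ∃ δ : ℝ, 0 < δ ∧ δ < 1 ∧
      ∀ a b : ℕ → ℂ, (∀ k < n, ‖a k‖ < 1) → (∀ k < n, ‖b k‖ < 1) →
        1 - δ < ‖a (n - 1)‖ → 1 - δ < ‖b (n - 1)‖ →
          DnSq f a b n < ε := by
  set η := ε / ((n : ℝ) ^ 2 + 1)
  obtain ⟨δ, hδ0, hδ1, hδ⟩ :=
    exists_forall_norm_innerT2_TMprod_lt hf.1 (Real.sqrt_pos.2 (by positivity : 0 < η))
  refine ⟨δ, hδ0, hδ1, fun a b ha hb han hbn => ?_⟩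
  set T := (range n ×ˢ range n).filter fun p => max p.1 p.2 = n - 1
  have hterm : ∀ p ∈ T, ‖innerT2 f (TMprod a b p.1 p.2)‖ ^ 2 ≤ η := by
    intro p hp
    simp only [T, mem_filter, mem_product, mem_range] at hp
    obtain ⟨⟨hp1, hp2⟩, hmax⟩ := hp
    have hnear : 1 - δ < ‖a p.1‖ ∨ 1 - δ < ‖b p.2‖ := by
      rcases le_total p.2 p.1 with h | h
      · left; rwa [show p.1 = n - 1 by omega]
      · right; rwa [show p.2 = n - 1 by omega]
    exact ((Real.lt_sqrt (norm_nonneg _)).1 (hδ a b p.1 p.2 (fun i _ => ha i (by omega))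
      (fun i _ => hb i (by omega)) hnear)).le
  have hT : (T.card : ℝ) ≤ n ^ 2 := by
    exact_mod_cast (card_filter_le _ _).trans (by simp [sq])
  calc DnSq f a b n ≤ T.card • η := sum_le_card_nsmul _ _ _ hterm
    _ ≤ n ^ 2 * η := by rw [nsmul_eq_mul]; gcongr
    _ < ε := by
      rw [← mul_div_assoc, div_lt_iff₀ (by positivity)]
      nlinarith

/-- uniformly in all parameter choices, the `n`-th partial sum difference
energy is small once both `|a_n|` and `|b_n|` are close to `1`. -/
theorem DnSq_small_near_boundary (f : ℝ × ℝ → ℂ) (hf : MemH2T2 f)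
    (n : ℕ) (hn : 1 ≤ n) (ε : ℝ) (hε : 0 < ε) :
    ∃ δ : ℝ, 0 < δ ∧ δ < 1 ∧
      ∀ a b : ℕ → ℂ, (∀ k < n, ‖a k‖ < 1) → (∀ k < n, ‖b k‖ < 1) →
        1 - δ < ‖a (n - 1)‖ → 1 - δ < ‖b (n - 1)‖ →
          DnSq f a b n < ε :=
  DnSq_small_near_boundary_general f hf n ε hε
end
end

section
/- (Convergence of Weak Pre-Orthogonal Greedy Algorithm.) Let ℋ be a complex Hilbert space, 𝒜 ⊆ ℋ a set of unit vectors whose linear span is dense in ℋ, f ∈ ℋ, and ρ ∈ (0,1]. Let (a_n) be a sequence in 𝒜 such that, for every n: (i) Q_{n−1} a_n ≠ 0, where Q_{n−1} is the orthogonal projection onto the orthogonal complement of span{a₁,...,a_{n−1}} (Q₀ = Id), so that B_n := Q_{n−1} a_n / ‖Q_{n−1} a_n‖ is defined and {B₁,...,B_n} is the Gram–Schmidt orthonormalization of {a₁,...,a_n}; and (ii) with g_n := f − Σ_{k=1}^{n−1} ⟨f, B_k⟩ B_k, one has |⟨g_n, B_n⟩| ≥ ρ · sup { |⟨g_n, Q_{n−1}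 a / ‖Q_{n−1} a‖⟩| : a ∈ 𝒜, Q_{n−1} a ≠ 0 }. Then f = Σ_{k=1}^{∞} ⟨f, B_k⟩ B_k, with convergence in the norm of ℋ. -/
/-! The vectors `B n` are Mathlib's `gramSchmidtNormed ℂ a n`, hence orthonormal, so by Bessel's
inequality `∑ ⟪B k, f⟫ B k` converges to some `L` and `⟪B n, f⟫ → 0`. The remainder `g n` is
orthogonal to `span {a k | k < n}`, so for `x ∈ A` we have `⟪g n, x⟫ = ⟪g n, Q_n x⟫`, and the
selection rule together with `‖Q_n x‖ ≤ 1` bounds this by `ρ⁻¹ ‖⟪g n, B n⟫‖ = ρ⁻¹ ‖⟪B n, f⟫‖ → 0`.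
Passing to the limit, `f - L` is orthogonal to `A`, hence to its dense span, so `f = L`. -/

open Filter Finset

noncomputable section

/-- `Qproj a n f` is `Q_{n}f = f` minus the orthogonal projection of `f` onto
`span{a 0, …, a (n-1)}`, i.e. the orthogonal projection of `f` onto the orthogonal
complement of `span{a 0, …, a (n-1)}` (`Qproj a 0 = id`). -/
def Qproj {H : Type*} [NormedAddCommGroup H] [InnerProductSpace ℂ H]
    (a : ℕ → H) (n : ℕ) (f : H) : H :=
  letI : FiniteDimensional ℂ (Submodule.span ℂ (a '' Set.Iio n)) :=
    FiniteDimensional.span_of_finite ℂ ((Set.finite_Iio n).image a)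
  f - (Submodule.orthogonalProjectionOnto (Submodule.span ℂ (a '' Set.Iio n)) f : H)

open Submodule InnerProductSpace Topology

section InnerProduct

variable {𝕜 E ι : Type*} [RCLike 𝕜] [NormedAddCommGroup E] [InnerProductSpace 𝕜 E]
  {v : ι → E}

local notation "⟪" x ", " y "⟫" => inner 𝕜 x y

theorem Orthonormal.inner_sub_sum_inner_smul_of_notMem (hv : Orthonormal 𝕜 v) (x : E)
    {s : Finset ι} {i : ι} (hi : i ∉ s) :
    ⟪v i, x - ∑ k ∈ s, ⟪v k, x⟫ • v k⟫ = ⟪v i, x⟫ := by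
  rw [inner_sub_right, inner_sum, Finset.sum_eq_zero, sub_zero]
  intro k hk
  rw [inner_smul_right, hv.inner_eq_zero (ne_of_mem_of_not_mem hk hi).symm, mul_zero]

theorem mem_orthogonal_span_of_inner_eq_zero {s : Set E} {x : E} (h : ∀ u ∈ s, ⟪u, x⟫ = 0) :
    x ∈ (span 𝕜 s)ᗮ := by
  rw [mem_orthogonal]
  intro u hu
  exact mem_orthogonal_singleton_iff_inner_left.1
    (span_le.2 (fun y hy => mem_orthogonal_singleton_iff_inner_left.2 (h y hy)) hu)

theorem Orthonormal.sub_sum_inner_smul_mem_orthogonal (hv : Orthonormal 𝕜 v) (x : E)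
    (s : Finset ι) : x - ∑ k ∈ s, ⟪v k, x⟫ • v k ∈ (span 𝕜 (v '' s))ᗮ := by
  refine mem_orthogonal_span_of_inner_eq_zero ?_
  rintro _ ⟨i, hi, rfl⟩
  rw [inner_sub_right, hv.inner_right_sum _ hi, sub_self]

theorem Orthonormal.summable_inner_smul [CompleteSpace E] (hv : Orthonormal 𝕜 v) (x : E) :
    Summable fun i => ⟪v i, x⟫ • v i := by
  simpa [LinearIsometry.toSpanSingleton_apply] using
    (hv.orthogonalFamily.summable_iff_norm_sq_summable _).2 (hv.inner_products_summable x)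

theorem Orthonormal.tendsto_norm_inner_atTop_zero {v : ℕ → E} (hv : Orthonormal 𝕜 v) (x : E) :
    Tendsto (fun n => ‖⟪v n, x⟫‖) atTop (𝓝 0) := by
  simpa [Real.sqrt_sq (norm_nonneg _)] using
    (hv.inner_products_summable x).tendsto_atTop_zero.sqrt

theorem Orthonormal.tendsto_sum_range_inner_smul_of_dense [CompleteSpace E] {v : ℕ → E}
    (hv : Orthonormal 𝕜 v) {A : Set E} (hA : Dense (span 𝕜 A : Set E)) {x : E}
    (hx : ∀ y ∈ A, Tendsto (fun n => ⟪x - ∑ k ∈ range n, ⟪v k, x⟫ • v k, y⟫) atTop (𝓝 0)) :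
    Tendsto (fun n => ∑ k ∈ range n, ⟪v k, x⟫ • v k) atTop (𝓝 x) := by
  set L := ∑' k, ⟪v k, x⟫ • v k
  have hL : Tendsto (fun n => ∑ k ∈ range n, ⟪v k, x⟫ • v k) atTop (𝓝 L) :=
    (hv.summable_inner_smul x).hasSum.tendsto_sum_nat
  have hperp : x - L ∈ (span 𝕜 A)ᗮ := by
    refine mem_orthogonal_span_of_inner_eq_zero fun y hy => ?_
    rw [inner_eq_zero_symm]
    exact tendsto_nhds_unique ((tendsto_const_nhds.sub hL).inner tendsto_const_nhds) (hx y hy)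
  have hxL : x - L = 0 := hA.eq_zero_of_inner_left 𝕜 fun y hy =>
    inner_left_of_mem_orthogonal hy hperp
  rwa [← sub_eq_zero.1 hxL] at hL

theorem norm_inner_le_inv_mul_of_normalized {g b y : E} {ρ : ℝ} (hρ : 0 < ρ) (hy : ‖y‖ ≤ 1)
    (h : y ≠ 0 → ρ * ‖⟪g, (‖y‖ : 𝕜)⁻¹ • y⟫‖ ≤ ‖⟪g, b⟫‖) :
    ‖⟪g, y⟫‖ ≤ ρ⁻¹ * ‖⟪g, b⟫‖ := by
  rcases eq_or_ne y 0 with rfl | hy0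
  · simp only [inner_zero_right, norm_zero]
    positivity
  have hsel := h hy0
  rw [inner_smul_right, norm_mul, norm_inv, RCLike.norm_ofReal, abs_norm] at hsel
  rw [le_inv_mul_iff₀ hρ]
  calc ρ * ‖⟪g, y⟫‖ = ‖y‖ * (ρ * (‖y‖⁻¹ * ‖⟪g, y⟫‖)) := by
        field_simp [norm_ne_zero_iff.2 hy0]
    _ ≤ 1 * ‖⟪g, b⟫‖ := mul_le_mul hy hsel (by positivity) zero_le_one
    _ = ‖⟪g, b⟫‖ := one_mul _

theorem gramSchmidtNormed_orthonormal_of_ne_zero [LinearOrder ι] [LocallyFiniteOrderBot ι]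
    [WellFoundedLT ι] {f : ι → E} (hf : ∀ i, gramSchmidt 𝕜 f i ≠ 0) :
    Orthonormal 𝕜 (gramSchmidtNormed 𝕜 f) := by
  refine ⟨fun i => ?_, fun i j hij => ?_⟩
  · simp only [gramSchmidtNormed, norm_smul_inv_norm (hf i)]
  · simp only [gramSchmidtNormed, inner_smul_left, inner_smul_right,
      gramSchmidt_orthogonal 𝕜 f hij, mul_zero]

end InnerProduct

section Qproj

variable {H : Type*} [NormedAddCommGroup H] [InnerProductSpace ℂ H] (a : ℕ → H)

instance (n : ℕ) : FiniteDimensional ℂ (span ℂ (a '' Set.Iio n)) :=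
  FiniteDimensional.span_of_finite ℂ ((Set.finite_Iio n).image a)

theorem Qproj_eq_starProjection_orthogonal (n : ℕ) (x : H) :
    Qproj a n x = (span ℂ (a '' Set.Iio n))ᗮ.starProjection x := by
  rw [starProjection_orthogonal_val]
  rfl

theorem norm_Qproj_le (n : ℕ) (x : H) : ‖Qproj a n x‖ ≤ ‖x‖ := by
  rw [Qproj_eq_starProjection_orthogonal]
  exact norm_starProjection_apply_le _ x

theorem inner_Qproj_right_of_mem_orthogonal {n : ℕ} {g : H}
    (hg : g ∈ (span ℂ (a '' Set.Iio n))ᗮ) (x : H) :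
    inner ℂ g (Qproj a n x) = inner ℂ g x := by
  rw [Qproj_eq_starProjection_orthogonal, ← inner_starProjection_left_eq_right,
    starProjection_eq_self_iff.2 hg]

theorem gramSchmidt_mem_orthogonal_span (n : ℕ) :
    gramSchmidt ℂ a n ∈ (span ℂ (a '' Set.Iio n))ᗮ := by
  rw [← span_gramSchmidt_Iio]
  refine mem_orthogonal_span_of_inner_eq_zero ?_
  rintro _ ⟨i, hi, rfl⟩
  exact gramSchmidt_orthogonal ℂ a hi.ne

theorem Qproj_self_eq_gramSchmidt (n : ℕ) : Qproj a n (a n) = gramSchmidt ℂ a n := by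
  rw [Qproj_eq_starProjection_orthogonal]
  refine eq_starProjection_of_mem_orthogonal' (gramSchmidt_mem_orthogonal_span a n) ?_
    (gramSchmidt_def' ℂ a n)
  refine le_orthogonal_orthogonal _ (sum_mem fun i hi => ?_)
  rw [← span_gramSchmidt_Iio ℂ a n]
  refine span_mono (Set.singleton_subset_iff.2 ?_) (starProjection_apply_mem _ _)
  exact Set.mem_image_of_mem _ (Finset.mem_Iio.1 hi)

end Qproj

theorem WPOGA_convergence_general {H : Type*} [NormedAddCommGroup H] [InnerProductSpace ℂ H]
    [CompleteSpace H]
    (A : Set H) (hA1 : ∀ x ∈ A, ‖x‖ = 1)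
    (hA2 : Dense ((Submodule.span ℂ A : Submodule ℂ H) : Set H))
    (f : H) (ρ : ℝ) (hρ0 : 0 < ρ)
    (a : ℕ → H)
    (hQ : ∀ n, Qproj a n (a n) ≠ 0)
    (B : ℕ → H) (hB : ∀ n, B n = (‖Qproj a n (a n)‖ : ℂ)⁻¹ • Qproj a n (a n))
    (g : ℕ → H) (hg : ∀ n, g n = f - ∑ k ∈ Finset.range n, (inner ℂ (B k) f : ℂ) • B k)
    (hsel : ∀ n, ∀ x ∈ A, Qproj a n x ≠ 0 →
      ρ * ‖(inner ℂ (g n) ((‖Qproj a n x‖ : ℂ)⁻¹ • Qproj a n x) : ℂ)‖ ≤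
        ‖(inner ℂ (g n) (B n) : ℂ)‖) :
    Filter.Tendsto (fun n => ∑ k ∈ Finset.range n, (inner ℂ (B k) f : ℂ) • B k)
      Filter.atTop (nhds f) := by
  obtain rfl : B = gramSchmidtNormed ℂ a := funext fun n => by
    rw [hB, Qproj_self_eq_gramSchmidt]
    rfl
  have hBon : Orthonormal ℂ (gramSchmidtNormed ℂ a) :=
    gramSchmidtNormed_orthonormal_of_ne_zero fun n => Qproj_self_eq_gramSchmidt a n ▸ hQ n
  have hg_perp (n : ℕ) : g n ∈ (span ℂ (a '' Set.Iio n))ᗮ := by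
    rw [hg, ← span_gramSchmidt_Iio, ← span_gramSchmidtNormed, ← Finset.coe_range]
    exact hBon.sub_sum_inner_smul_mem_orthogonal f (range n)
  have hgB (n : ℕ) : ‖inner ℂ (g n) (gramSchmidtNormed ℂ a n)‖ =
      ‖inner ℂ (gramSchmidtNormed ℂ a n) f‖ := by
    rw [norm_inner_symm, hg, hBon.inner_sub_sum_inner_smul_of_notMem f notMem_range_self]
  refine hBon.tendsto_sum_range_inner_smul_of_dense hA2 fun x hx => ?_
  simp_rw [← hg]
  refine squeeze_zero_norm (fun n => ?_) (by
    simpa using (hBon.tendsto_norm_inner_atTop_zero f).const_mul ρ⁻¹)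
  rw [← inner_Qproj_right_of_mem_orthogonal a (hg_perp n), ← hgB]
  exact norm_inner_le_inv_mul_of_normalized hρ0 ((norm_Qproj_le a n x).trans (hA1 x hx).le)
    (hsel n x hx)

/-- Convergence of the Weak Pre-Orthogonal Greedy Algorithm, 0-based
indexing: under the Pre-Orthogonal ρ-Maximal Selection Principle, `f = Σ_k ⟨f,B_k⟩B_k`
in norm.  Here `B n` is the Gram–Schmidt orthonormalization of `a 0, …, a n`
(`B n = Q_n a_n / ‖Q_n a_n‖`), and `g n = f - Σ_{k<n} ⟨f,B_k⟩B_k` is the orthogonal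
standard remainder. -/
theorem WPOGA_convergence {H : Type*} [NormedAddCommGroup H] [InnerProductSpace ℂ H]
    [CompleteSpace H]
    (A : Set H) (hA1 : ∀ x ∈ A, ‖x‖ = 1)
    (hA2 : Dense ((Submodule.span ℂ A : Submodule ℂ H) : Set H))
    (f : H) (ρ : ℝ) (hρ0 : 0 < ρ) (hρ1 : ρ ≤ 1)
    (a : ℕ → H) (ha : ∀ n, a n ∈ A)
    (hQ : ∀ n, Qproj a n (a n) ≠ 0)
    (B : ℕ → H) (hB : ∀ n, B n = (‖Qproj a n (a n)‖ : ℂ)⁻¹ • Qproj a n (a n))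
    (g : ℕ → H) (hg : ∀ n, g n = f - ∑ k ∈ Finset.range n, (inner ℂ (B k) f : ℂ) • B k)
    (hsel : ∀ n, ∀ x ∈ A, Qproj a n x ≠ 0 →
      ρ * ‖(inner ℂ (g n) ((‖Qproj a n x‖ : ℂ)⁻¹ • Qproj a n x) : ℂ)‖ ≤
        ‖(inner ℂ (g n) (B n) : ℂ)‖) :
    Filter.Tendsto (fun n => ∑ k ∈ Finset.range n, (inner ℂ (B k) f : ℂ) • B k)
      Filter.atTop (nhds f) :=
  WPOGA_convergence_general A hA1 hA2 f ρ hρ0 a hQ B hB g hg hsel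
end
end
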